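/- arXiv:2110.00805 — 2 statements merged into one kernel-verified Lean document; each statement's English description precedes it below -/
import Mathlib

section
/- Let q be an odd prime power, r ≥ 2 even, N | q^r - 1 with gcd((q^r-1)/(q-1), N) = 2, H ≤ F_{q^r}^* of order (q^r-1)/N, and a ∈ F_{q^r}^* a non-square. Then the set {a·y·z : y ∈ F_q^*, z ∈ H} equals the set of non-squares of F_{q^r}^*, and every non-square arises with the same multiplicity 2(q-1)/N. -/
/-!
The homomorphism `Kˣ × H → Fˣ, (y, z) ↦ y z` has image `Kˣ ⊔ H`, whose index divides
`gcd([Fˣ : Kˣ], [Fˣ : H]) = gcd((q^r - 1)/(q - 1), N) = 2`. Both indices are even, so by Euler's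
criterion `Kˣ` and `H` consist of squares; hence `Kˣ ⊔ H` is the index-two subgroup of squares and
`a (Kˣ ⊔ H)` is the coset of non-squares. Every fibre of the homomorphism has the size of its kernel,
`|Kˣ| |H| / |Kˣ ⊔ H| = 2(q - 1)/N`.
-/

theorem Subgroup.index_eq_card_div_card {G : Type*} [Group G] [Finite G] (H : Subgroup G) :
    H.index = Nat.card G / Nat.card H :=
  (Nat.div_eq_of_eq_mul_left Nat.card_pos H.index_mul_card.symm).symm

theorem Subgroup.sup_eq_of_gcd_index_eq_two {G : Type*} [Group G] {A B S : Subgroup G}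
    (hA : A ≤ S) (hB : B ≤ S) (hS : S ≠ ⊤) (hAB : Nat.gcd A.index B.index = 2) :
    A ⊔ B = S ∧ S.index = 2 := by
  have hdvd : (A ⊔ B).index ∣ 2 :=
    hAB ▸ Nat.dvd_gcd (index_dvd_of_le le_sup_left) (index_dvd_of_le le_sup_right)
  have hle : A ⊔ B ≤ S := sup_le hA hB
  have hSindex : S.index = 2 := by
    rcases (Nat.dvd_prime Nat.prime_two).mp ((index_dvd_of_le hle).trans hdvd) with h | h
    · exact absurd (index_eq_one.mp h) hS
    · exact h
  have hABindex : (A ⊔ B).index = 2 := Nat.dvd_antisymm hdvd (hSindex ▸ index_dvd_of_le hle)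
  have : (A ⊔ B).FiniteIndex := ⟨by omega⟩
  refine ⟨hle.eq_of_not_lt fun hlt => ?_, hSindex⟩
  have := index_strictAnti hlt
  omega

theorem MonoidHom.range_coprod {M N P : Type*} [Group M] [Group N] [CommGroup P]
    (f : M →* P) (g : N →* P) : (f.coprod g).range = f.range ⊔ g.range := by
  ext x
  simp [Subgroup.mem_sup, MonoidHom.coprod_apply]

theorem MonoidHom.card_fiber_mul_card_range {G M : Type*} [Group G] [Group M] (f : G →* M)
    {x : M} (hx : x ∈ f.range) : Nat.card {p // f p = x} * Nat.card f.range = Nat.card G := by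
  obtain ⟨p₀, rfl⟩ := hx
  rw [show Nat.card {p // f p = f p₀} = Nat.card f.ker from Nat.card_congr (f.fiberEquivKer p₀),
    ← Subgroup.index_ker, Subgroup.card_mul_index]

theorem Subfield.index_range_unitsMap {F : Type*} [Field F] [Finite F] (K : Subfield F) :
    (Units.map K.subtype.toMonoidHom).range.index = (Nat.card F - 1) / (Nat.card K - 1) := by
  rw [Subgroup.index_eq_card_div_card, Nat.card_units,
    ← Nat.card_congr (MonoidHom.ofInjective (Units.map_injective K.subtype.injective)).toEquiv,
    Nat.card_units]

namespace FiniteField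

variable {F : Type*} [Field F] [Fintype F]

theorem le_square_of_even_index (hF : ringChar F ≠ 2) {B : Subgroup Fˣ} (hB : Even B.index) :
    B ≤ Subgroup.square Fˣ := by
  obtain ⟨k, hk⟩ := hB
  intro z hz
  have hcard : Fintype.card F / 2 = Nat.card B * k := by
    have h := B.index_mul_card
    rw [Nat.card_units, Nat.card_eq_fintype_card (α := F), hk,
      show (k + k) * Nat.card B = 2 * (Nat.card B * k) by ring] at h
    have := odd_card_of_char_ne_two hF
    have : 0 < Fintype.card F := Fintype.card_pos
    omega
  rw [Subgroup.mem_square, unit_isSquare_iff hF, hcard, pow_mul,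
    orderOf_dvd_iff_pow_eq_one.mp (B.orderOf_dvd_natCard hz), one_pow]

theorem sup_eq_square_of_gcd_index_eq_two (hF : ringChar F ≠ 2) {a : Fˣ} (ha : ¬IsSquare a)
    {A B : Subgroup Fˣ} (hAB : Nat.gcd A.index B.index = 2) :
    A ⊔ B = Subgroup.square Fˣ ∧ (Subgroup.square Fˣ).index = 2 :=
  Subgroup.sup_eq_of_gcd_index_eq_two
    (le_square_of_even_index hF (even_iff_two_dvd.mpr (hAB ▸ Nat.gcd_dvd_left _ _)))
    (le_square_of_even_index hF (even_iff_two_dvd.mpr (hAB ▸ Nat.gcd_dvd_right _ _)))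
    (fun h => ha (h.ge (Subgroup.mem_top a))) hAB

end FiniteField

theorem nonsquare_coset_multiset_general (q r N : ℕ) (hodd : Odd q)
    (hNdvd : N ∣ q ^ r - 1)
    (hgcd : Nat.gcd ((q ^ r - 1) / (q - 1)) N = 2)
    (F : Type*) [Field F] [Fintype F] (hF : Fintype.card F = q ^ r)
    (K : Subfield F) (hK : Nat.card K = q)
    (H : Subgroup Fˣ) (hH : Nat.card H = (q ^ r - 1) / N)
    (a : Fˣ) (ha : ¬ IsSquare a) :
    (∀ x : Fˣ,
      (∃ (y : Kˣ) (z : H), (a : F) * ((y : K) : F) * ((z : Fˣ) : F) = (x : F)) ↔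
        ¬ IsSquare x) ∧
    ∀ x : Fˣ, ¬ IsSquare x →
      Nat.card {p : Kˣ × H // (a : F) * ((p.1 : K) : F) * ((p.2 : Fˣ) : F) = (x : F)} =
        2 * (q - 1) / N := by
  have hchar : ringChar F ≠ 2 := by
    rw [Ne, FiniteField.even_card_iff_char_two, hF, ← Nat.even_iff]
    exact Nat.not_even_iff_odd.mpr hodd.pow
  have hcardF : Nat.card Fˣ = q ^ r - 1 := by rw [Nat.card_units, Nat.card_eq_fintype_card, hF]
  have hHindex : H.index = N := by
    rw [H.index_eq_card_div_card, hcardF, hH, Nat.div_div_self hNdvd (hcardF ▸ Nat.card_pos.ne')]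
  let ψ : Kˣ × H →* Fˣ := (Units.map K.subtype.toMonoidHom).coprod H.subtype
  obtain ⟨hrange, hindex⟩ : ψ.range = Subgroup.square Fˣ ∧ (Subgroup.square Fˣ).index = 2 := by
    rw [MonoidHom.range_coprod, Subgroup.range_subtype]
    refine FiniteField.sup_eq_square_of_gcd_index_eq_two hchar ha ?_
    rw [K.index_range_unitsMap, Nat.card_eq_fintype_card, hF, hK, hHindex, hgcd]
  have hmem (x : Fˣ) : a⁻¹ * x ∈ ψ.range ↔ ¬ IsSquare x := by
    rw [hrange, Subgroup.mul_mem_iff_of_index_two hindex, inv_mem_iff]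
    simp [ha]
  have hmul_eq (x : Fˣ) (p : Kˣ × H) :
      (a : F) * ((p.1 : K) : F) * ((p.2 : Fˣ) : F) = (x : F) ↔ ψ p = a⁻¹ * x := by
    rw [eq_inv_mul_iff_mul_eq, Units.ext_iff]
    simp [ψ, MonoidHom.coprod_apply, mul_assoc]
  refine ⟨fun x => ?_, fun x hx => ?_⟩
  · simp only [← hmem, MonoidHom.mem_range, Prod.exists, ← hmul_eq]
  have hcount : Nat.card {p : Kˣ × H // (a : F) * ((p.1 : K) : F) * ((p.2 : Fˣ) : F) = (x : F)} *
      Nat.card ψ.range = (q - 1) * Nat.card H := by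
    rw [Nat.card_congr (Equiv.subtypeEquivRight (hmul_eq x)),
      ψ.card_fiber_mul_card_range ((hmem x).mpr hx), Nat.card_prod, Nat.card_units, hK]
  have hhalf : Nat.card ψ.range * 2 = N * Nat.card H := by
    rw [hrange, ← hindex, Subgroup.card_mul_index, hcardF, hH, Nat.mul_div_cancel' hNdvd]
  have hN : 0 < N := hHindex ▸ Nat.pos_of_ne_zero H.index_ne_zero_of_finite
  refine (Nat.div_eq_of_eq_mul_left hN (Nat.eq_of_mul_eq_mul_right (Nat.card_pos (α := H)) ?_)).symm
  calc 2 * (q - 1) * Nat.card H = (q - 1) * Nat.card H * 2 := by ring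
    _ = _ * N * Nat.card H := by rw [← hcount, mul_assoc, hhalf]; ring

/-- Lemma 4.4 (non-square case): for a non-square `a ∈ F_{q^r}^*`, the multiset
`{a y z : y ∈ F_q^*, z ∈ H}` consists exactly of the non-squares of `F_{q^r}^*`,
each appearing with multiplicity `2(q-1)/N`. -/
theorem nonsquare_coset_multiset (q r N : ℕ) (hq : IsPrimePow q) (hodd : Odd q)
    (hr : 2 ≤ r) (hre : Even r) (hN : 0 < N) (hNdvd : N ∣ q ^ r - 1)
    (hgcd : Nat.gcd ((q ^ r - 1) / (q - 1)) N = 2)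
    (F : Type*) [Field F] [Fintype F] (hF : Fintype.card F = q ^ r)
    (K : Subfield F) (hK : Nat.card K = q)
    (H : Subgroup Fˣ) (hH : Nat.card H = (q ^ r - 1) / N)
    (a : Fˣ) (ha : ¬ IsSquare a) :
    (∀ x : Fˣ,
      (∃ (y : Kˣ) (z : H), (a : F) * ((y : K) : F) * ((z : Fˣ) : F) = (x : F)) ↔
        ¬ IsSquare x) ∧
    ∀ x : Fˣ, ¬ IsSquare x →
      Nat.card {p : Kˣ × H // (a : F) * ((p.1 : K) : F) * ((p.2 : Fˣ) : F) = (x : F)} =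
        2 * (q - 1) / N :=
  nonsquare_coset_multiset_general q r N hodd hNdvd hgcd F hF K hK H hH a ha
end

section
/- Under the paper's hypotheses (q odd prime power, r ≥ 2 even, nN = q^r - 1, gcd((q^r-1)/(q-1), N) = 2), for every a ∈ F_{q^r}^* and every b with r ≤ b ≤ n - 1, the b-symbol weight of the codeword c(a) = (Tr(a η^{jN}))_{j=0}^{n-1} equals n. Equivalently, the cyclic sequence (Tr(a η^{jN}))_j has no r consecutive zeros. -/
/-- The `b`-symbol map `π_b`; indices are cyclic (mod `n`). -/
def pib {F : Type*} [Field F] {n : ℕ} (b : ℕ) (x : ZMod n → F) :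
    ZMod n → (Fin b → F) :=
  fun i j => x (i + ((j : ℕ) : ZMod n))

/-- The `b`-symbol Hamming weight `w_b(x)`. -/
noncomputable def wb {F : Type*} [Field F] {n : ℕ} (b : ℕ) (x : ZMod n → F) : ℕ :=
  Nat.card {i : ZMod n // pib b x i ≠ 0}

/-! The element `β = η ^ N` has order `n`. The field `K(β)` has `q ^ d` elements with `d ∣ r` and
`n ∣ q ^ d - 1`; if `d < r`, then `(q ^ r - 1) / (q ^ d - 1) = 1 + q ^ d + ⋯ > q` divides both `N`
and `(q ^ r - 1) / (q - 1)`, against `gcd = 2`. Hence `β` generates `F` over `K`, so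
`1, β, …, β ^ (r - 1)` is a `K`-basis of `F`, and by nondegeneracy of the trace form
`Tr (a β ^ (i + j))`, `j < r`, cannot all vanish: every window of length `b ≥ r` is nonzero. -/

open Module IntermediateField

theorem eq_of_dvd_of_dvd_pow_sub_one {q r N n d : ℕ} (hq : 2 ≤ q) (hr : r ≠ 0) (hn : n ≠ 0)
    (hN : N ≠ 0) (hnN : n * N = q ^ r - 1) (hgcd : Nat.gcd ((q ^ r - 1) / (q - 1)) N ≤ q)
    (hdr : d ∣ r) (hnd : n ∣ q ^ d - 1) : d = r := by
  by_contra hne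
  obtain ⟨e, rfl⟩ := hdr
  have hd : d ≠ 0 := by rintro rfl; simp at hr
  have he : 2 ≤ e := by
    rcases e with _ | _ | e <;> simp_all
  have hqd : q ≤ q ^ d := Nat.le_self_pow hd q
  set T := ∑ k ∈ Finset.range e, (q ^ d) ^ k with hT_def
  have hT : (q ^ d - 1) * T = q ^ (d * e) - 1 := by
    rw [pow_mul, hT_def, Nat.geomSum_eq (hq.trans hqd),
      Nat.mul_div_cancel' (Nat.sub_one_dvd_pow_sub_one _ e)]
  have hTN : T ∣ N :=
    (mul_dvd_mul_iff_left hn).mp (hnN ▸ hT ▸ mul_dvd_mul_right hnd T)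
  have hTΦ : T ∣ (q ^ (d * e) - 1) / (q - 1) :=
    Nat.dvd_div_of_mul_dvd (hT ▸ mul_dvd_mul_right (Nat.sub_one_dvd_pow_sub_one q d) T)
  have hTq : T ≤ q :=
    (Nat.le_of_dvd (Nat.gcd_pos_of_pos_right _ (Nat.pos_of_ne_zero hN))
      (Nat.dvd_gcd hTΦ hTN)).trans hgcd
  have hqT : 1 + q ^ d ≤ T := by
    simpa [Finset.sum_range_succ] using
      Finset.sum_le_sum_of_subset (f := fun k => (q ^ d) ^ k) (Finset.range_subset_range.2 he)
  omega

theorem orderOf_dvd_natCard_adjoin_sub_one {K F : Type*} [Field K] [Field F] [Algebra K F]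
    [Finite F] {x : F} (hx : x ≠ 0) : orderOf x ∣ Nat.card K⟮x⟯ - 1 := by
  have : Fintype K⟮x⟯ := Fintype.ofFinite _
  let y : K⟮x⟯ := ⟨x, mem_adjoin_simple_self K x⟩
  rw [Nat.card_eq_fintype_card]
  exact orderOf_dvd_of_pow_eq_one
    (congrArg Subtype.val (FiniteField.pow_card_sub_one_eq_one y (Subtype.coe_ne_coe.mp hx)))

theorem eq_zero_of_trace_mul_pow_eq_zero {K L : Type*} [Field K] [Field L] [Algebra K L]
    [FiniteDimensional K L] [Algebra.IsSeparable K L] {β : L}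
    (hβ : finrank K K⟮β⟯ = finrank K L) {a : L}
    (h : ∀ j < finrank K L, Algebra.trace K L (a * β ^ j) = 0) : a = 0 := by
  have hdeg : (minpoly K β).natDegree = finrank K L :=
    (adjoin.finrank (IsIntegral.of_finite K β)).symm.trans hβ
  have hspan := (linearIndependent_pow (K := K) β).span_eq_top_of_card_eq_finrank'
    (by rw [Fintype.card_fin, hdeg])
  refine (traceForm_nondegenerate K L).1 a fun y => ?_
  rw [LinearMap.ext_on_range hspan (f := Algebra.traceForm K L a) (g := 0)
    fun j => h j (hdeg ▸ j.2)]
  rfl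

theorem pow_val_add_natCast {M : Type*} [Monoid M] {n : ℕ} [NeZero n] {g : M} (hg : g ^ n = 1)
    (i : ZMod n) (j : ℕ) : g ^ (i + j).val = g ^ i.val * g ^ j := by
  rw [← pow_add, ZMod.val_add, ZMod.val_natCast, Nat.add_mod_mod]
  conv_rhs => rw [← Nat.mod_add_div (i.val + j) n, pow_add, pow_mul, hg, one_pow, mul_one]

theorem wb_eq_of_forall_exists_ne_zero {F : Type*} [Field F] {n b : ℕ} {x : ZMod n → F}
    (h : ∀ i : ZMod n, ∃ j < b, x (i + j) ≠ 0) : wb b x = n := by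
  refine (Nat.card_congr (Equiv.subtypeUnivEquiv fun i hi => ?_)).trans (Nat.card_zmod n)
  obtain ⟨j, hj, hx⟩ := h i
  exact hx (congrFun hi ⟨j, hj⟩)

theorem wb_eq_n_for_large_b_general (q r N n b : ℕ) (hq : IsPrimePow q)
    (hr : 2 ≤ r) (hN : 0 < N) [NeZero n]
    (hnN : n * N = q ^ r - 1)
    (hgcd : Nat.gcd ((q ^ r - 1) / (q - 1)) N = 2)
    (hrb : r ≤ b)
    (F : Type*) [Field F] [Fintype F] (hF : Fintype.card F = q ^ r)
    (K : Subfield F) (hK : Nat.card K = q)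
    (η : Fˣ) (hη : ∀ x : Fˣ, x ∈ Subgroup.zpowers η)
    (a : F) (ha : a ≠ 0) :
    wb b (fun j : ZMod n => Algebra.trace ↥K F (a * (η : F) ^ (N * j.val))) = n := by
  have hrank : finrank K F = r := by
    have := natCard_eq_pow_finrank (K := K) (V := F)
    rw [Nat.card_eq_fintype_card, hF, hK] at this
    exact (Nat.pow_right_injective hq.two_le this).symm
  have hη_ord : orderOf η = n * N := by
    rw [orderOf_eq_card_of_forall_mem_zpowers hη, Nat.card_units, Nat.card_eq_fintype_card, hF,
      hnN]
  set β : F := (η : F) ^ N with hβ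
  have hβ0 : β ≠ 0 := pow_ne_zero N η.ne_zero
  have hβn : orderOf β = n := by
    rw [hβ, ← Units.val_pow_eq_pow_val, orderOf_units,
      orderOf_pow_of_dvd hN.ne' (hη_ord ▸ dvd_mul_left N n), hη_ord, Nat.mul_div_cancel _ hN]
  have hgen : finrank K K⟮β⟯ = finrank K F := by
    rw [hrank]
    refine eq_of_dvd_of_dvd_pow_sub_one hq.two_le (by omega) (NeZero.ne n) hN.ne' hnN
      (hgcd ▸ hq.two_le) (hrank ▸ Dvd.intro _ (finrank_mul_finrank K K⟮β⟯ F)) ?_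
    rw [← hK, ← natCard_eq_pow_finrank, ← hβn]
    exact orderOf_dvd_natCard_adjoin_sub_one hβ0
  apply wb_eq_of_forall_exists_ne_zero
  intro i
  by_contra! h
  refine mul_ne_zero ha (pow_ne_zero i.val hβ0) (eq_zero_of_trace_mul_pow_eq_zero hgen ?_)
  intro j hj
  have hwindow := h j (by omega)
  rwa [pow_mul, pow_val_add_natCast (hβn ▸ pow_orderOf_eq_one β), ← mul_assoc] at hwindow

/-- Theorem 3.3: under the paper's hypotheses, for every nonzero `a` and every
`b` with `r ≤ b ≤ n - 1`, the `b`-symbol weight of `c(a)` equals `n`. -/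
theorem wb_eq_n_for_large_b (q r N n b : ℕ) (hq : IsPrimePow q) (hodd : Odd q)
    (hr : 2 ≤ r) (hre : Even r) (hN : 0 < N) [NeZero n]
    (hnN : n * N = q ^ r - 1)
    (hgcd : Nat.gcd ((q ^ r - 1) / (q - 1)) N = 2)
    (hrb : r ≤ b) (hbn : b ≤ n - 1)
    (F : Type*) [Field F] [Fintype F] (hF : Fintype.card F = q ^ r)
    (K : Subfield F) (hK : Nat.card K = q)
    (η : Fˣ) (hη : ∀ x : Fˣ, x ∈ Subgroup.zpowers η)
    (a : F) (ha : a ≠ 0) :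
    wb b (fun j : ZMod n => Algebra.trace ↥K F (a * (η : F) ^ (N * j.val))) = n :=
  wb_eq_n_for_large_b_general q r N n b hq hr hN hnN hgcd hrb F hF K hK η hη a ha
end
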